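/- For n×n real symmetric positive semi-definite matrices A and B that commute, the Alpha Procrustes distance reduces to the power Euclidean distance: (1/|α|)(tr[A^{2α} + B^{2α} − 2(A^α B^{2α} A^α)^{1/2}])^{1/2} = ‖(A^α − B^α)/α‖_F for α > 0. -/

import Mathlib

open Classical in
/-- The positive semi-definite square root of a positive semi-definite real matrix
(junk value `0` if the matrix is not positive semi-definite). -/
noncomputable def psdSqrt {n : ℕ} (M : Matrix (Fin n) (Fin n) ℝ) : Matrix (Fin n) (Fin n) ℝ :=
  if h : M.PosSemidef then
    (h.1.eigenvectorUnitary : Matrix (Fin n) (Fin n) ℝ) *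
      Matrix.diagonal (fun i => Real.sqrt (h.1.eigenvalues i)) *
      (star h.1.eigenvectorUnitary : Matrix (Fin n) (Fin n) ℝ)
  else 0

open Classical in
/-- The real power `M ^ r` of a symmetric real matrix, defined through the spectral
functional calculus: `M ^ r = U diag(λᵢ^r) Uᵀ` (with `0 ^ r = 0` for `r > 0`).
Junk value `0` if `M` is not symmetric. -/
noncomputable def matPow {n : ℕ} (M : Matrix (Fin n) (Fin n) ℝ) (r : ℝ) :
    Matrix (Fin n) (Fin n) ℝ :=
  if h : M.IsHermitian then
    (h.eigenvectorUnitary : Matrix (Fin n) (Fin n) ℝ) *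
      Matrix.diagonal (fun i => h.eigenvalues i ^ r) *
      (star h.eigenvectorUnitary : Matrix (Fin n) (Fin n) ℝ)
  else 0

/-- The Frobenius norm of a real matrix. -/
noncomputable def frobNorm {n : ℕ} (M : Matrix (Fin n) (Fin n) ℝ) : ℝ :=
  Real.sqrt (∑ i, ∑ j, (M i j) ^ 2)

/-!
Commuting positive semi-definite matrices have commuting positive semi-definite powers
`X = A ^ α`, `Y = B ^ α`. Their product `X * Y` is then positive semi-definite with square
`X * Y ^ 2 * X`, so the square root in the Alpha Procrustes distance is `X * Y`, and the trace
collapses to `tr ((X - Y)ᵀ (X - Y)) = ‖X - Y‖_F ^ 2`.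
-/

open Matrix
open scoped MatrixOrder

lemma Commute.sqrt_mul_mul_self_mul {A : Type*} [PartialOrder A] [NonUnitalRing A]
    [TopologicalSpace A] [StarRing A] [Module ℝ A] [SMulCommClass ℝ A A] [IsScalarTower ℝ A A]
    [StarOrderedRing A] [NonUnitalContinuousFunctionalCalculus ℝ A IsSelfAdjoint]
    [NonnegSpectrumClass ℝ A] [IsSemitopologicalRing A] [T2Space A]
    {a b : A} (h : Commute a b) (ha : 0 ≤ a) (hb : 0 ≤ b) :
    CFC.sqrt (a * (b * b) * a) = a * b := by
  refine CFC.sqrt_unique ?_ (h.mul_nonneg ha hb)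
  rw [show a * (b * b) * a = a * b * (b * a) by simp only [mul_assoc], ← h.eq]

lemma Matrix.trace_transpose_sub_mul_sub {m R : Type*} [Fintype m] [CommRing R]
    {X Y : Matrix m m R} (hX : X.IsSymm) (hY : Y.IsSymm) :
    ((X - Y)ᵀ * (X - Y)).trace = (X * X + Y * Y - 2 • (X * Y)).trace := by
  rw [transpose_sub, hX.eq, hY.eq]
  simp only [sub_mul, mul_sub, trace_sub, trace_add, trace_smul, trace_mul_comm Y X]
  module

section

variable {n : ℕ}

lemma frobNorm_eq_sqrt_trace (M : Matrix (Fin n) (Fin n) ℝ) :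
    frobNorm M = √(Mᵀ * M).trace := by
  simp only [frobNorm, trace, diag_apply, mul_apply, transpose_apply, sq]
  rw [Finset.sum_comm]

lemma frobNorm_smul (c : ℝ) (M : Matrix (Fin n) (Fin n) ℝ) :
    frobNorm (c • M) = |c| * frobNorm M := by
  simp only [frobNorm, Matrix.smul_apply, smul_eq_mul, mul_pow, ← Finset.mul_sum]
  rw [Real.sqrt_mul (sq_nonneg c), Real.sqrt_sq_eq_abs]

lemma psdSqrt_eq_sqrt (M : Matrix (Fin n) (Fin n) ℝ) : psdSqrt M = CFC.sqrt M := by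
  by_cases hM : M.PosSemidef
  · rw [CFC.sqrt_eq_cfc, cfc_nnreal_eq_real _ M hM.nonneg, hM.1.cfc_eq, psdSqrt, dif_pos hM,
      IsHermitian.cfc, Unitary.conjStarAlgAut_apply]
    congr 2
    ext i j
    simp [diagonal_apply, max_eq_left (hM.eigenvalues_nonneg i)]
  · rw [psdSqrt, dif_neg hM, CFC.sqrt, cfcₙ_apply_of_not_predicate]
    rwa [nonneg_iff_posSemidef]

lemma matPow_eq_cfc {M : Matrix (Fin n) (Fin n) ℝ} (hM : M.IsHermitian)
    (r : ℝ) : matPow M r = cfc (fun x : ℝ => x ^ r) M := by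
  rw [matPow, dif_pos hM, hM.cfc_eq, IsHermitian.cfc, Unitary.conjStarAlgAut_apply]
  rfl

lemma commute_matPow {M N : Matrix (Fin n) (Fin n) ℝ} (hM : M.IsHermitian)
    (hN : N.IsHermitian) (h : Commute M N) (r s : ℝ) : Commute (matPow M r) (matPow N s) := by
  rw [matPow_eq_cfc hM, matPow_eq_cfc hN]
  exact ((h.cfc_real _).symm.cfc_real _).symm

lemma posSemidef_matPow {M : Matrix (Fin n) (Fin n) ℝ} (hM : M.PosSemidef) (r : ℝ) :
    (matPow M r).PosSemidef := by
  rw [← nonneg_iff_posSemidef, matPow_eq_cfc hM.1]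
  exact cfc_nonneg fun x hx => Real.rpow_nonneg (spectrum_nonneg_of_nonneg hM.nonneg hx) r

lemma matPow_natCast_mul {M : Matrix (Fin n) (Fin n) ℝ} (hM : M.PosSemidef)
    (k : ℕ) (r : ℝ) : matPow M (k * r) = matPow M r ^ k := by
  rw [matPow_eq_cfc hM.1, matPow_eq_cfc hM.1,
    ← cfc_pow (fun x : ℝ => x ^ r) k M (M.finite_real_spectrum.continuousOn _)]
  refine cfc_congr fun x hx => ?_
  rw [mul_comm, Real.rpow_mul_natCast (spectrum_nonneg_of_nonneg hM.nonneg hx)]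

end

theorem stmt4_general {n : ℕ} (A B : Matrix (Fin n) (Fin n) ℝ)
    (hA : A.PosSemidef) (hB : B.PosSemidef) (hcomm : A * B = B * A) (α : ℝ) :
    (1 / |α|) * Real.sqrt ((matPow A (2 * α) + matPow B (2 * α)
        - 2 • psdSqrt (matPow A α * matPow B (2 * α) * matPow A α)).trace)
      = frobNorm (α⁻¹ • (matPow A α - matPow B α)) := by
  set X := matPow A α
  set Y := matPow B α
  have hX : X.PosSemidef := posSemidef_matPow hA α
  have hY : Y.PosSemidef := posSemidef_matPow hB α
  have hXY : Commute X Y := commute_matPow hA.1 hB.1 hcomm α α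
  have hA2 : matPow A (2 * α) = X * X := by
    rw [← sq]; exact_mod_cast matPow_natCast_mul hA 2 α
  have hB2 : matPow B (2 * α) = Y * Y := by
    rw [← sq]; exact_mod_cast matPow_natCast_mul hB 2 α
  rw [hA2, hB2, psdSqrt_eq_sqrt, hXY.sqrt_mul_mul_self_mul hX.nonneg hY.nonneg,
    ← trace_transpose_sub_mul_sub (isHermitian_iff_isSymm.mp hX.1)
      (isHermitian_iff_isSymm.mp hY.1),
    ← frobNorm_eq_sqrt_trace, frobNorm_smul, abs_inv, one_div]

/-- For commuting positive semi-definite `A, B` and `α > 0`, the Alpha Procrustes distance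
reduces to the power Euclidean distance. -/
theorem stmt4 {n : ℕ} (A B : Matrix (Fin n) (Fin n) ℝ)
    (hA : A.PosSemidef) (hB : B.PosSemidef) (hcomm : A * B = B * A) (α : ℝ) (hα : 0 < α) :
    (1 / |α|) * Real.sqrt ((matPow A (2 * α) + matPow B (2 * α)
        - 2 • psdSqrt (matPow A α * matPow B (2 * α) * matPow A α)).trace)
      = frobNorm (α⁻¹ • (matPow A α - matPow B α)) :=
  stmt4_general A B hA hB hcomm α
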